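/- arXiv:2303.11795 — 3 statements merged into one kernel-verified Lean document; each statement's English description precedes it below -/
import Mathlib

section
/- The real bilinear map u(H) × b₁⁺(H) → ℝ given by (A, B) ↦ Im Tr(AB) is continuous and non-degenerate in both arguments: if A ∈ u(H) satisfies Im Tr(AB) = 0 for all B ∈ b₁⁺(H) then A = 0, and if B ∈ b₁⁺(H) satisfies Im Tr(AB) = 0 for all A ∈ u(H) then B = 0. -/
/- Setting: `H` is a separable complex Hilbert space with a fixed orthonormal
(Hilbert) basis `e` indexed by `ℤ`. -/

set_option synthInstance.maxHeartbeats 1000000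
set_option maxHeartbeats 2000000

noncomputable section
open ContinuousLinearMap

namespace PL

variable {H : Type*} [NormedAddCommGroup H] [InnerProductSpace ℂ H] [CompleteSpace H]

/-- `A` is a bounded skew-hermitian operator: `A* = -A`. -/
def SkewHerm (A : H →L[ℂ] H) : Prop := star A = -A

/-- `A` is Hilbert–Schmidt: `∑ₙ ‖A eₙ‖² < ∞` (computed in the orthonormal basis `e`;
this is equivalent to the basis-free notion). -/
def IsHS (e : HilbertBasis ℤ ℂ H) (A : H →L[ℂ] H) : Prop :=
  Summable (fun n : ℤ => ‖A (e n)‖ ^ 2)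

/-- The Hilbert–Schmidt norm `‖A‖₂`. -/
def hsNorm (e : HilbertBasis ℤ ℂ H) (A : H →L[ℂ] H) : ℝ :=
  Real.sqrt (∑' n : ℤ, ‖A (e n)‖ ^ 2)

/-- The absolute value `|A| = √(A* A)` of a bounded operator, via the continuous
functional calculus. -/
def absCLM (A : H →L[ℂ] H) : H →L[ℂ] H := CFC.sqrt (star A * A)

/-- `A` is trace class: `Tr |A| = ∑ₙ ⟨eₙ, |A| eₙ⟩ < ∞`. -/
def IsTC (e : HilbertBasis ℤ ℂ H) (A : H →L[ℂ] H) : Prop :=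
  Summable (fun n : ℤ => (inner ℂ (e n) (absCLM A (e n)) : ℂ).re)

/-- The trace norm `‖A‖₁ = Tr |A|`. -/
def traceNorm (e : HilbertBasis ℤ ℂ H) (A : H →L[ℂ] H) : ℝ :=
  ∑' n : ℤ, (inner ℂ (e n) (absCLM A (e n)) : ℂ).re

/-- The trace of a (trace-class) operator: `Tr A = ∑ₙ ⟨eₙ, A eₙ⟩`. -/
def traceOp (e : HilbertBasis ℤ ℂ H) (A : H →L[ℂ] H) : ℂ :=
  ∑' n : ℤ, (inner ℂ (e n) (A (e n)) : ℂ)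

/-- `A` is upper triangular: `⟨eₘ, A eₙ⟩ = 0` whenever `m < n`. -/
def UpperTri (e : HilbertBasis ℤ ℂ H) (A : H →L[ℂ] H) : Prop :=
  ∀ m n : ℤ, m < n → (inner ℂ (e m) (A (e n)) : ℂ) = 0

/-- All diagonal entries `⟨eₙ, A eₙ⟩` of `A` are real. -/
def RealDiag (e : HilbertBasis ℤ ℂ H) (A : H →L[ℂ] H) : Prop :=
  ∀ n : ℤ, (inner ℂ (e n) (A (e n)) : ℂ).im = 0

/-- Membership in `b₁⁺(H)`: trace-class, upper triangular, real diagonal. -/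
def InB1 (e : HilbertBasis ℤ ℂ H) (A : H →L[ℂ] H) : Prop :=
  IsTC e A ∧ UpperTri e A ∧ RealDiag e A

/-- Membership in `u₁(H)`: trace-class and skew-hermitian. -/
def InU1 (e : HilbertBasis ℤ ℂ H) (A : H →L[ℂ] H) : Prop :=
  IsTC e A ∧ SkewHerm A

/-- Membership in `b₂⁺(H)`: Hilbert–Schmidt, upper triangular, real diagonal. -/
def InB2 (e : HilbertBasis ℤ ℂ H) (A : H →L[ℂ] H) : Prop :=
  IsHS e A ∧ UpperTri e A ∧ RealDiag e A

/-- Membership in `u₂(H)`: Hilbert–Schmidt and skew-hermitian. -/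
def InU2 (e : HilbertBasis ℤ ℂ H) (A : H →L[ℂ] H) : Prop :=
  IsHS e A ∧ SkewHerm A

/-
The bound comes from a regularised polar decomposition: for every `δ > 0` the functional calculus
writes `B = C X + E` with `X = |B|^{1/2}`, `‖C x‖ ≤ ‖X x‖` and `‖E x‖ ≤ δ ‖X x‖`. Since
`∑ ‖X eₙ‖² = ‖B‖₁`, Cauchy–Schwarz in the Hilbert–Schmidt norm bounds `∑ₙ |⟪eₙ, A C X eₙ⟫|` by
`‖A‖ ‖B‖₁`, while the `E` part is `O(δ)` on every finite set of indices. Hence the diagonal of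
`AB` is absolutely summable and `|Im Tr(AB)| ≤ ‖Tr(AB)‖ ≤ ‖A‖ ‖B‖₁`.

Non-degeneracy is read off from rank-one test operators. Pairing `A` with the operators
`c eₙ ⊗ eₘ*` (`m ≤ n`, `c` real if `m = n`) of `b₁⁺(H)` shows that `A` is upper triangular with
real diagonal; pairing `B` with `i x ⊗ x*` shows `Re ⟪x, B x⟫ = 0` for all `x`, i.e. `B` is
skew-hermitian. A skew-hermitian operator that is upper triangular with real diagonal vanishes.
-/

local notation "⟪" x ", " y "⟫" => @inner ℂ _ _ x y

open InnerProductSpace (rankOne rankOne_apply comp_rankOne rankOne_comp adjoint_rankOne)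
open RCLike (re)
open scoped Topology

section CStarAlgebra

variable {A : Type*} [CStarAlgebra A] [PartialOrder A] [StarOrderedRing A]

/-- The witnesses are `g = b / (b² + δ²)` and `k = δ² / (b² + δ²)`. -/
lemma exists_mul_add_eq_one_regularized {b : A} (hb : IsSelfAdjoint b) {δ : ℝ} (hδ : 0 < δ) :
    ∃ g k : A, g * b + k = 1 ∧ star (b * b * g) * (b * b * g) ≤ b * b ∧
      star (b * b * k) * (b * b * k) ≤ δ ^ 2 • (b * b) := by
  have hpos : ∀ s : ℝ, 0 < s ^ 2 + δ ^ 2 := fun s => by positivity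
  have hg : Continuous fun s : ℝ => s / (s ^ 2 + δ ^ 2) :=
    continuous_id.div (by fun_prop) fun s => (hpos s).ne'
  have hk : Continuous fun s : ℝ => δ ^ 2 / (s ^ 2 + δ ^ 2) :=
    continuous_const.div (by fun_prop) fun s => (hpos s).ne'
  have hsq : b * b = cfc (fun s : ℝ => s ^ 2) b := by rw [cfc_pow_id b 2 hb, sq]
  have hstar : ∀ f : ℝ → ℝ, Continuous f →
      star (b * b * cfc f b) * (b * b * cfc f b) = cfc (fun s => (s ^ 2 * f s) ^ 2) b := by
    intro f hf
    rw [hsq, ← cfc_mul _ _ b, (cfc_predicate (fun s => s ^ 2 * f s) b).star_eq, ← cfc_mul _ _ b]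
    simp only [sq]
  refine ⟨cfc (fun s : ℝ => s / (s ^ 2 + δ ^ 2)) b, cfc (fun s : ℝ => δ ^ 2 / (s ^ 2 + δ ^ 2)) b,
    ?_, ?_, ?_⟩
  · nth_rw 2 [← cfc_id' ℝ b]
    rw [← cfc_mul _ _ b hg.continuousOn, ← cfc_add (a := b) _ _ (by fun_prop) hk.continuousOn,
      ← cfc_const_one ℝ b]
    exact cfc_congr fun s _ => by field_simp [(hpos s).ne']
  · rw [hstar _ hg, hsq]
    refine cfc_mono fun s _ => ?_
    rw [mul_div_assoc', div_pow, div_le_iff₀ (by positivity)]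
    nlinarith [mul_nonneg (pow_nonneg (sq_nonneg s) 2) (sq_nonneg δ),
      mul_nonneg (sq_nonneg s) (pow_nonneg (sq_nonneg δ) 2)]
  · rw [hstar _ hk, hsq, ← cfc_const_mul _ _ b]
    refine cfc_mono fun s _ => ?_
    rw [mul_div_assoc', div_pow, div_le_iff₀ (by positivity)]
    nlinarith [mul_nonneg (mul_nonneg (sq_nonneg s) (sq_nonneg δ))
      (add_nonneg (add_nonneg (pow_nonneg (sq_nonneg s) 2) (mul_nonneg (sq_nonneg s)
        (sq_nonneg δ))) (pow_nonneg (sq_nonneg δ) 2))]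

end CStarAlgebra

lemma _root_.HilbertBasis.hasSum_norm_inner_sq {ι 𝕜 E : Type*} [RCLike 𝕜] [NormedAddCommGroup E]
    [InnerProductSpace 𝕜 E] (b : HilbertBasis ι 𝕜 E) (x : E) :
    HasSum (fun i => ‖inner 𝕜 (b i) x‖ ^ 2) (‖x‖ ^ 2) := by
  have h := (b.hasSum_inner_mul_inner x x).mapL RCLike.reCLM
  simp only [RCLike.reCLM_apply, ← inner_conj_symm x (b _), RCLike.conj_mul,
    inner_self_eq_norm_sq_to_K] at h
  exact_mod_cast h

lemma _root_.HilbertBasis.eq_zero_of_inner_apply_eq_zero {ι 𝕜 E : Type*} [RCLike 𝕜]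
    [NormedAddCommGroup E] [InnerProductSpace 𝕜 E] (b : HilbertBasis ι 𝕜 E) {T : E →L[𝕜] E}
    (h : ∀ i j, inner 𝕜 (b i) (T (b j)) = 0) : T = 0 := by
  have hcol : ∀ j, T (b j) = 0 := fun j =>
    (b.hasSum_repr (T (b j))).unique (by simp [b.repr_apply_apply, h])
  ext x
  exact ((b.hasSum_repr x).mapL T).unique (by simp [hcol])

lemma traceOp_rankOne {E : Type*} [NormedAddCommGroup E] [InnerProductSpace ℂ E]
    (b : HilbertBasis ℤ ℂ E) (x y : E) : traceOp b (rankOne ℂ x y) = ⟪y, x⟫ := by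
  rw [traceOp, ← b.tsum_inner_mul_inner]
  refine tsum_congr fun n => ?_
  rw [rankOne_apply, inner_smul_right, mul_comm]

lemma norm_apply_sq (T : H →L[ℂ] H) (x : H) : ‖T x‖ ^ 2 = re ⟪x, (star T * T) x⟫ := by
  rw [mul_apply_eq_comp, star_eq_adjoint, adjoint_inner_right, inner_self_eq_norm_sq]

lemma norm_apply_le_of_star_mul_self_le {S T : H →L[ℂ] H} (h : star T * T ≤ star S * S)
    (x : H) : ‖T x‖ ≤ ‖S x‖ := by
  have hx := ((ContinuousLinearMap.le_def _ _).mp h).re_inner_nonneg_right x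
  rw [sub_apply, inner_sub_right, map_sub, sub_nonneg, ← norm_apply_sq, ← norm_apply_sq] at hx
  exact (pow_le_pow_iff_left₀ (norm_nonneg _) (norm_nonneg _) two_ne_zero).mp hx

lemma norm_absCLM_apply (B : H →L[ℂ] H) (x : H) : ‖absCLM B x‖ = ‖B x‖ := by
  have hP : IsSelfAdjoint (absCLM B) := .of_nonneg (CFC.sqrt_nonneg _)
  refine (pow_left_inj₀ (norm_nonneg _) (norm_nonneg _) two_ne_zero).mp ?_
  rw [norm_apply_sq, norm_apply_sq, hP.star_eq, absCLM,
    CFC.sqrt_mul_sqrt_self _ (star_mul_self_nonneg B)]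

lemma norm_sqrt_absCLM_apply_sq (B : H →L[ℂ] H) (x : H) :
    ‖CFC.sqrt (absCLM B) x‖ ^ 2 = re ⟪x, absCLM B x⟫ := by
  rw [norm_apply_sq, (IsSelfAdjoint.of_nonneg (CFC.sqrt_nonneg _)).star_eq,
    CFC.sqrt_mul_sqrt_self (absCLM B) (CFC.sqrt_nonneg _)]

lemma exists_eq_mul_sqrt_absCLM_add (B : H →L[ℂ] H) {δ : ℝ} (hδ : 0 < δ) :
    ∃ C E : H →L[ℂ] H, B = C * CFC.sqrt (absCLM B) + E ∧
      (∀ x, ‖C x‖ ≤ ‖CFC.sqrt (absCLM B) x‖) ∧ ∀ x, ‖E x‖ ≤ δ * ‖CFC.sqrt (absCLM B) x‖ := by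
  set X := CFC.sqrt (absCLM B)
  have hX : IsSelfAdjoint X := .of_nonneg (CFC.sqrt_nonneg _)
  have hXX : X * X = absCLM B := CFC.sqrt_mul_sqrt_self _ (CFC.sqrt_nonneg _)
  have hB : ∀ T : H →L[ℂ] H, ∀ x, ‖(B * T) x‖ = ‖(X * X * T) x‖ := fun T x => by
    rw [hXX, mul_apply_eq_comp, mul_apply_eq_comp, norm_absCLM_apply]
  obtain ⟨g, k, hgk, hg, hk⟩ := exists_mul_add_eq_one_regularized hX hδ
  refine ⟨B * g, B * k, ?_, fun x => ?_, fun x => ?_⟩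
  · rw [mul_assoc, ← mul_add, hgk, mul_one]
  · rw [hB]
    exact norm_apply_le_of_star_mul_self_le (by rwa [hX.star_eq]) x
  · rw [hB, ← abs_of_pos hδ, ← Real.norm_eq_abs, ← norm_smul, ← smul_apply]
    refine norm_apply_le_of_star_mul_self_le (S := δ • X) ?_ x
    rwa [star_smul, hX.star_eq, star_trivial δ, smul_mul_smul_comm, ← sq δ]

lemma inner_apply_of_skewHerm {T : H →L[ℂ] H} (hT : SkewHerm T) (x y : H) :
    ⟪x, T y⟫ = -starRingEnd ℂ ⟪y, T x⟫ := by
  rw [← adjoint_inner_left, ← star_eq_adjoint, hT, neg_apply, inner_neg_left, inner_conj_symm]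

lemma skewHerm_of_re_inner_apply_self_eq_zero {T : H →L[ℂ] H} (h : ∀ x, re ⟪x, T x⟫ = 0) :
    SkewHerm T := by
  have h0 : ((star T + T : H →L[ℂ] H) : H →ₗ[ℂ] H) = 0 := by
    refine (inner_map_self_eq_zero _).mp fun x => ?_
    rw [coe_coe, add_apply, inner_add_left, star_eq_adjoint, adjoint_inner_left,
      ← inner_conj_symm (T x) x, RCLike.add_conj, h x, RCLike.ofReal_zero, mul_zero]
  rw [SkewHerm, eq_neg_iff_add_eq_zero]
  exact ContinuousLinearMap.ext fun x => LinearMap.congr_fun h0 x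

variable (e : HilbertBasis ℤ ℂ H)

lemma sum_norm_adjoint_apply_sq_le (M : H →L[ℂ] H) (hM : Summable fun m => ‖M (e m)‖ ^ 2)
    (F : Finset ℤ) : ∑ n ∈ F, ‖star M (e n)‖ ^ 2 ≤ ∑' m, ‖M (e m)‖ ^ 2 := by
  have hrow : ∀ n, HasSum (fun m => ‖⟪e n, M (e m)⟫‖ ^ 2) (‖star M (e n)‖ ^ 2) := fun n => by
    simpa [star_eq_adjoint, adjoint_inner_right, norm_inner_symm (e n)]
      using e.hasSum_norm_inner_sq (star M (e n))
  have hcol : ∀ m, ∑ n ∈ F, ‖⟪e n, M (e m)⟫‖ ^ 2 ≤ ‖M (e m)‖ ^ 2 := fun m =>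
    e.orthonormal.sum_inner_products_le _
  calc ∑ n ∈ F, ‖star M (e n)‖ ^ 2 = ∑' m, ∑ n ∈ F, ‖⟪e n, M (e m)⟫‖ ^ 2 := by
        rw [Summable.tsum_finsetSum fun n _ => (hrow n).summable]
        exact Finset.sum_congr rfl fun n _ => (hrow n).tsum_eq.symm
    _ ≤ ∑' m, ‖M (e m)‖ ^ 2 := Summable.tsum_le_tsum hcol
        (hM.of_nonneg_of_le (fun m => by positivity) hcol) hM

lemma sum_norm_inner_mul_apply_le_sqrt_mul_sqrt (M X : H →L[ℂ] H)
    (hM : Summable fun m => ‖M (e m)‖ ^ 2) (F : Finset ℤ) : ∑ n ∈ F, ‖⟪e n, (M * X) (e n)⟫‖ ≤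
      √(∑' m, ‖M (e m)‖ ^ 2) * √(∑ n ∈ F, ‖X (e n)‖ ^ 2) := by
  calc ∑ n ∈ F, ‖⟪e n, (M * X) (e n)⟫‖ ≤ ∑ n ∈ F, ‖star M (e n)‖ * ‖X (e n)‖ := by
        refine Finset.sum_le_sum fun n _ => ?_
        rw [mul_apply_eq_comp, star_eq_adjoint, ← adjoint_inner_left]
        exact norm_inner_le_norm _ _
    _ ≤ √(∑ n ∈ F, ‖star M (e n)‖ ^ 2) * √(∑ n ∈ F, ‖X (e n)‖ ^ 2) :=
        Real.sum_mul_le_sqrt_mul_sqrt _ _ _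
    _ ≤ √(∑' m, ‖M (e m)‖ ^ 2) * √(∑ n ∈ F, ‖X (e n)‖ ^ 2) := by
        gcongr
        exact sum_norm_adjoint_apply_sq_le e M hM F

lemma hasSum_norm_sqrt_absCLM_apply_sq {B : H →L[ℂ] H} (hB : IsTC e B) :
    HasSum (fun n => ‖CFC.sqrt (absCLM B) (e n)‖ ^ 2) (traceNorm e B) := by
  simp only [norm_sqrt_absCLM_apply_sq]
  exact hB.hasSum

lemma sum_norm_inner_mul_apply_le_traceNorm_add (A : H →L[ℂ] H) {B : H →L[ℂ] H}
    (hB : IsTC e B) (F : Finset ℤ) {δ : ℝ} (hδ : 0 < δ) : ∑ n ∈ F, ‖⟪e n, (A * B) (e n)⟫‖ ≤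
      ‖A‖ * traceNorm e B + δ * (‖A‖ * ∑ n ∈ F, ‖CFC.sqrt (absCLM B) (e n)‖) := by
  set X := CFC.sqrt (absCLM B)
  have hX := hasSum_norm_sqrt_absCLM_apply_sq e hB
  obtain ⟨C, E, hBCE, hC, hE⟩ := exists_eq_mul_sqrt_absCLM_add B hδ
  have hAC : ∀ m, ‖(A * C) (e m)‖ ^ 2 ≤ ‖A‖ ^ 2 * ‖X (e m)‖ ^ 2 := fun m => by
    rw [← mul_pow]
    gcongr
    exact (A.le_opNorm _).trans (by gcongr; exact hC _)
  have hACs : Summable fun m => ‖(A * C) (e m)‖ ^ 2 :=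
    (hX.summable.mul_left _).of_nonneg_of_le (fun m => by positivity) hAC
  have hfirst : ∑ n ∈ F, ‖⟪e n, (A * C * X) (e n)⟫‖ ≤ ‖A‖ * traceNorm e B := by
    have htsum : ∑' m, ‖(A * C) (e m)‖ ^ 2 ≤ ‖A‖ ^ 2 * traceNorm e B := by
      rw [← hX.tsum_eq, ← tsum_mul_left]
      exact Summable.tsum_le_tsum hAC hACs (hX.summable.mul_left _)
    have hsum : ∑ n ∈ F, ‖X (e n)‖ ^ 2 ≤ traceNorm e B :=
      sum_le_hasSum F (fun n _ => by positivity) hX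
    calc _ ≤ √(∑' m, ‖(A * C) (e m)‖ ^ 2) * √(∑ n ∈ F, ‖X (e n)‖ ^ 2) :=
          sum_norm_inner_mul_apply_le_sqrt_mul_sqrt e _ X hACs F
      _ ≤ √(‖A‖ ^ 2 * traceNorm e B) * √(traceNorm e B) := by gcongr
      _ = ‖A‖ * traceNorm e B := by
          rw [Real.sqrt_mul (sq_nonneg _), Real.sqrt_sq (norm_nonneg _), mul_assoc,
            Real.mul_self_sqrt (hX.nonneg fun n => by positivity)]
  have hsecond : ∑ n ∈ F, ‖⟪e n, (A * E) (e n)⟫‖ ≤ δ * (‖A‖ * ∑ n ∈ F, ‖X (e n)‖) := by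
    rw [Finset.mul_sum, Finset.mul_sum]
    refine Finset.sum_le_sum fun n _ => ?_
    calc ‖⟪e n, (A * E) (e n)⟫‖ ≤ ‖(A * E) (e n)‖ := by
          simpa [e.orthonormal.1 n] using norm_inner_le_norm (e n) ((A * E) (e n))
      _ ≤ ‖A‖ * (δ * ‖X (e n)‖) := (A.le_opNorm _).trans (by gcongr; exact hE _)
      _ = δ * (‖A‖ * ‖X (e n)‖) := by ring
  calc ∑ n ∈ F, ‖⟪e n, (A * B) (e n)⟫‖ ≤
        ∑ n ∈ F, (‖⟪e n, (A * C * X) (e n)⟫‖ + ‖⟪e n, (A * E) (e n)⟫‖) := by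
        refine Finset.sum_le_sum fun n _ => ?_
        rw [hBCE, mul_add, mul_assoc, add_apply, inner_add_right]
        exact norm_add_le _ _
    _ ≤ _ := by rw [Finset.sum_add_distrib]; exact add_le_add hfirst hsecond

lemma sum_norm_inner_mul_apply_le_traceNorm (A : H →L[ℂ] H) {B : H →L[ℂ] H} (hB : IsTC e B)
    (F : Finset ℤ) : ∑ n ∈ F, ‖⟪e n, (A * B) (e n)⟫‖ ≤ ‖A‖ * traceNorm e B := by
  set K := ‖A‖ * ∑ n ∈ F, ‖CFC.sqrt (absCLM B) (e n)‖
  have hlim : Filter.Tendsto (fun δ : ℝ => ‖A‖ * traceNorm e B + δ * K) (𝓝[>] 0)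
      (𝓝 (‖A‖ * traceNorm e B)) := by
    refine tendsto_nhdsWithin_of_tendsto_nhds ?_
    simpa using ((continuous_id.mul continuous_const).const_add _).tendsto (0 : ℝ)
  exact ge_of_tendsto hlim (eventually_nhdsWithin_of_forall fun δ hδ =>
    sum_norm_inner_mul_apply_le_traceNorm_add e A hB F hδ)

lemma norm_traceOp_mul_le (A : H →L[ℂ] H) {B : H →L[ℂ] H} (hB : IsTC e B) :
    ‖traceOp e (A * B)‖ ≤ ‖A‖ * traceNorm e B := by
  have hs : Summable fun n => ‖⟪e n, (A * B) (e n)⟫‖ :=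
    summable_of_sum_le (fun n => norm_nonneg _) (sum_norm_inner_mul_apply_le_traceNorm e A hB)
  exact (norm_tsum_le_tsum_norm hs).trans
    (hs.tsum_le_of_sum_le (sum_norm_inner_mul_apply_le_traceNorm e A hB))

lemma eq_zero_of_skewHerm_of_upperTri {T : H →L[ℂ] H} (hT : SkewHerm T) (hU : UpperTri e T)
    (hD : RealDiag e T) : T = 0 := by
  refine e.eq_zero_of_inner_apply_eq_zero fun m n => ?_
  rcases lt_trichotomy m n with hmn | rfl | hmn
  · exact hU m n hmn
  · have h := congrArg Complex.re (inner_apply_of_skewHerm hT (e m) (e m))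
    rw [Complex.neg_re, Complex.conj_re] at h
    exact Complex.ext (by rw [Complex.zero_re]; linarith) (hD m)
  · rw [inner_apply_of_skewHerm hT, hU n m hmn, map_zero, neg_zero]

lemma isTC_of_apply_eq_zero {B : H →L[ℂ] H} (s : Finset ℤ) (h : ∀ n ∉ s, B (e n) = 0) :
    IsTC e B := by
  refine summable_of_ne_finset_zero (s := s) fun n hn => ?_
  rw [norm_eq_zero.mp ((norm_absCLM_apply B (e n)).trans (by rw [h n hn, norm_zero])),
    inner_zero_right, Complex.zero_re]

lemma inB1_rankOne (c : ℂ) {m n : ℤ} (hmn : m ≤ n) (hc : m = n → c.im = 0) :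
    InB1 e (rankOne ℂ (c • e n) (e m)) := by
  refine ⟨isTC_of_apply_eq_zero e {m} fun l hl => ?_, fun k l hkl => ?_, fun k => ?_⟩
  · rw [rankOne_apply, orthonormal_iff_ite.mp e.orthonormal, if_neg (by simpa [eq_comm] using hl),
      zero_smul]
  · simp only [rankOne_apply, inner_smul_right, orthonormal_iff_ite.mp e.orthonormal]
    split_ifs <;> first | omega | simp
  · simp only [rankOne_apply, inner_smul_right, orthonormal_iff_ite.mp e.orthonormal]
    split_ifs with h1 h2
    · simpa using hc (h1.trans h2)
    all_goals simp

lemma eq_zero_of_forall_inB1_im_traceOp_mul_eq_zero {A : H →L[ℂ] H} (hA : SkewHerm A)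
    (h : ∀ B, InB1 e B → (traceOp e (A * B)).im = 0) : A = 0 := by
  have hentry : ∀ c m n, m ≤ n → (m = n → c.im = 0) → (c * ⟪e m, A (e n)⟫).im = 0 :=
    fun c m n hmn hc => by
      have hB := h _ (inB1_rankOne e c hmn hc)
      rwa [mul_def, comp_rankOne, traceOp_rankOne, map_smul, inner_smul_right] at hB
  refine eq_zero_of_skewHerm_of_upperTri e hA (fun m n hmn => Complex.ext ?_ ?_) fun n => ?_
  · simpa using hentry Complex.I m n hmn.le fun h => absurd h hmn.ne
  · simpa using hentry 1 m n hmn.le fun _ => rfl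
  · simpa using hentry 1 n n le_rfl fun _ => rfl

lemma eq_zero_of_forall_skewHerm_im_traceOp_mul_eq_zero {B : H →L[ℂ] H} (hB : InB1 e B)
    (h : ∀ A, SkewHerm A → (traceOp e (A * B)).im = 0) : B = 0 := by
  refine eq_zero_of_skewHerm_of_upperTri e (skewHerm_of_re_inner_apply_self_eq_zero fun x => ?_)
    hB.2.1 hB.2.2
  have hA : SkewHerm (rankOne ℂ (Complex.I • x) x) := by
    rw [SkewHerm, star_eq_adjoint, adjoint_rankOne]
    simp [map_smulₛₗ, Complex.conj_I]
  have hAB := h _ hA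
  rwa [mul_def, rankOne_comp, traceOp_rankOne, adjoint_inner_left, map_smul, inner_smul_right,
    Complex.I_mul_im] at hAB

/-- The real bilinear map `u(H) × b₁⁺(H) → ℝ`, `(A, B) ↦ Im Tr(AB)`, is
continuous (bounded) and non-degenerate in both arguments. -/
theorem statement_0 {H : Type*} [NormedAddCommGroup H] [InnerProductSpace ℂ H]
    [CompleteSpace H] (e : HilbertBasis ℤ ℂ H) :
    (∃ c : ℝ, ∀ A B : H →L[ℂ] H, SkewHerm A → InB1 e B →
      |(traceOp e (A * B)).im| ≤ c * ‖A‖ * traceNorm e B) ∧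
    (∀ A : H →L[ℂ] H, SkewHerm A →
      (∀ B : H →L[ℂ] H, InB1 e B → (traceOp e (A * B)).im = 0) → A = 0) ∧
    (∀ B : H →L[ℂ] H, InB1 e B →
      (∀ A : H →L[ℂ] H, SkewHerm A → (traceOp e (A * B)).im = 0) → B = 0) := by
  refine ⟨⟨1, fun A B _ hB => ?_⟩, fun A hA => eq_zero_of_forall_inB1_im_traceOp_mul_eq_zero e hA,
    fun B hB => eq_zero_of_forall_skewHerm_im_traceOp_mul_eq_zero e hB⟩
  rw [one_mul]
  exact (Complex.abs_im_le_norm _).trans (norm_traceOp_mul_le e A hB.1)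

end PL
end
end

section
/- The Banach space L₂(H) of Hilbert–Schmidt operators decomposes as the direct sum L₂(H) = u₂(H) ⊕ b₂⁺(H): every Hilbert–Schmidt operator x can be written uniquely as x = u + b with u a skew-hermitian Hilbert–Schmidt operator and b ∈ b₂⁺(H), and the corresponding projections p_{u₂} and p_{b₂⁺} are bounded linear operators on L₂(H). -/
/- Setting: `H` is a separable complex Hilbert space with a fixed orthonormal
(Hilbert) basis `e` indexed by `ℤ`. -/

set_option synthInstance.maxHeartbeats 1000000
set_option maxHeartbeats 2000000

noncomputable section
open ContinuousLinearMap

/-!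
Work with matrix entries `x m n = ⟪e m, x (e n)⟫`. If `x = u + b` with `u` skew-hermitian, then
`b m n + conj (b n m) = x m n + conj (x n m)`; for `b` upper triangular with real diagonal this
forces `b m n = 0` for `m < n`, `b n n = Re (x n n)` and `b m n = x m n + conj (x n m)` for `m > n`.
Conversely, this matrix is square summable, hence the matrix of a bounded operator `b`, and the
entries of both `b` and `x - b` are bounded by `|x m n| + |x n m|`, so both are Hilbert–Schmidt
with norm at most `2 ‖x‖₂`. An operator that is skew-hermitian and in `b₂⁺(H)` has zero matrix:
this gives uniqueness, and uniqueness makes the two projections real-linear.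
-/

open scoped InnerProductSpace ComplexConjugate

theorem memℓp_two_iff {α : Type*} {F : α → Type*} [∀ a, NormedAddCommGroup (F a)] {f : ∀ a, F a} :
    Memℓp f 2 ↔ Summable fun a => ‖f a‖ ^ 2 := by
  simpa using memℓp_gen_iff (E := F) (p := 2) (f := f) (by norm_num)

theorem summable_sq_and_tsum_sq_le_of_le_add_swap {α : Type*} {g h : α × α → ℝ}
    (hh : Summable fun p => h p ^ 2) (hg₀ : ∀ p, 0 ≤ g p) (hg : ∀ p, g p ≤ h p + h p.swap) :
    Summable (fun p => g p ^ 2) ∧ ∑' p, g p ^ 2 ≤ 4 * ∑' p, h p ^ 2 := by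
  have hh' : Summable fun p : α × α => h p.swap ^ 2 := hh.prod_symm
  have hbound : ∀ p, g p ^ 2 ≤ 2 * h p ^ 2 + 2 * h p.swap ^ 2 := fun p => by
    nlinarith [hg₀ p, hg p, sq_nonneg (h p - h p.swap)]
  have hsum := (hh.mul_left 2).add (hh'.mul_left 2)
  have hg' : Summable fun p => g p ^ 2 := hsum.of_nonneg_of_le (fun p => sq_nonneg _) hbound
  refine ⟨hg', (hg'.tsum_le_tsum hbound hsum).trans_eq ?_⟩
  have hswap : ∑' p : α × α, h p.swap ^ 2 = ∑' p, h p ^ 2 :=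
    (Equiv.prodComm α α).tsum_eq fun p => h p ^ 2
  rw [(hh.mul_left 2).tsum_add (hh'.mul_left 2), tsum_mul_left, tsum_mul_left, hswap]
  ring

theorem Submodule.eq_and_eq_of_disjoint_of_add_eq_add {R M : Type*} [Ring R] [AddCommGroup M]
    [Module R M] {p q : Submodule R M} (h : Disjoint p q) {x x' y y' : M} (hx : x ∈ p)
    (hx' : x' ∈ p) (hy : y ∈ q) (hy' : y' ∈ q) (hxy : x + y = x' + y') : x = x' ∧ y = y' := by
  have := Submodule.disjoint_iff_add_eq_zero.mp h (sub_mem hx hx') (sub_mem hy hy')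
    (by rw [sub_add_sub_comm, hxy, sub_self])
  exact ⟨sub_eq_zero.mp this.1, sub_eq_zero.mp this.2⟩

theorem ContinuousLinearMap.inner_star_apply {𝕜 E : Type*} [RCLike 𝕜] [NormedAddCommGroup E]
    [InnerProductSpace 𝕜 E] [CompleteSpace E] (A : E →L[𝕜] E) (v w : E) :
    ⟪v, star A w⟫_𝕜 = conj ⟪w, A v⟫_𝕜 := by
  rw [star_eq_adjoint, adjoint_inner_right, inner_conj_symm]

namespace HilbertBasis

variable {ι 𝕜 E : Type*} [RCLike 𝕜] [NormedAddCommGroup E] [InnerProductSpace 𝕜 E]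
  (b : HilbertBasis ι 𝕜 E)

theorem hasSum_sq_norm_inner (v : E) : HasSum (fun i => ‖⟪b i, v⟫_𝕜‖ ^ 2) (‖v‖ ^ 2) := by
  simpa [b.repr_apply_apply] using lp.hasSum_norm (p := 2) (by norm_num) (b.repr v)

theorem ext_inner {A B : E →L[𝕜] E} (h : ∀ i j, ⟪b i, A (b j)⟫_𝕜 = ⟪b i, B (b j)⟫_𝕜) :
    A = B := by
  refine ContinuousLinearMap.ext_on
    (Submodule.dense_iff_topologicalClosure_eq_top.mpr b.dense_span) ?_
  rintro - ⟨j, rfl⟩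
  exact b.repr.injective <| lp.ext <| funext fun i => by simpa [b.repr_apply_apply] using h i j

theorem summable_sq_norm_apply_iff (A : E →L[𝕜] E) :
    Summable (fun j => ‖A (b j)‖ ^ 2) ↔
      Summable (fun p : ι × ι => ‖⟪b p.1, A (b p.2)⟫_𝕜‖ ^ 2) := by
  have hcol := fun j => b.hasSum_sq_norm_inner (A (b j))
  calc Summable (fun j => ‖A (b j)‖ ^ 2)
      ↔ Summable (fun p : ι × ι => ‖⟪b p.2, A (b p.1)⟫_𝕜‖ ^ 2) := by
        rw [summable_prod_of_nonneg fun _ => sq_nonneg _]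
        simp [fun j => (hcol j).summable, fun j => (hcol j).tsum_eq]
    _ ↔ _ := ⟨Summable.prod_symm, Summable.prod_symm⟩

theorem tsum_sq_norm_apply (A : E →L[𝕜] E) :
    ∑' j, ‖A (b j)‖ ^ 2 = ∑' p : ι × ι, ‖⟪b p.1, A (b p.2)⟫_𝕜‖ ^ 2 := by
  have hcol := fun j => b.hasSum_sq_norm_inner (A (b j))
  by_cases hA : Summable fun j => ‖A (b j)‖ ^ 2
  · have hA' : Summable (fun p : ι × ι => ‖⟪b p.2, A (b p.1)⟫_𝕜‖ ^ 2) :=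
      ((b.summable_sq_norm_apply_iff A).mp hA).prod_symm
    calc ∑' j, ‖A (b j)‖ ^ 2 = ∑' p : ι × ι, ‖⟪b p.2, A (b p.1)⟫_𝕜‖ ^ 2 := by
          rw [hA'.tsum_prod' fun j => (hcol j).summable]
          exact tsum_congr fun j => (hcol j).tsum_eq.symm
      _ = _ := (Equiv.prodComm ι ι).tsum_eq (fun p : ι × ι => ‖⟪b p.1, A (b p.2)⟫_𝕜‖ ^ 2)
  · rw [tsum_eq_zero_of_not_summable hA,
      tsum_eq_zero_of_not_summable (mt (b.summable_sq_norm_apply_iff A).mpr hA)]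

section matrixCLM

variable {f : ι → ι → 𝕜} (hf : Summable fun p : ι × ι => ‖f p.1 p.2‖ ^ 2)
include hf

-- Conjugated because `⟪·, ·⟫` is conjugate-linear in its first argument.
def matrixRow (i : ι) : E :=
  b.repr.symm ⟨fun j => conj (f i j), memℓp_two_iff.mpr (by simpa using hf.prod_factor i)⟩

theorem inner_matrixRow (i j : ι) : ⟪b j, b.matrixRow hf i⟫_𝕜 = conj (f i j) := by
  rw [← b.repr_apply_apply, matrixRow, LinearIsometryEquiv.apply_symm_apply]

theorem summable_sq_norm_matrixRow : Summable fun i => ‖b.matrixRow hf i‖ ^ 2 := by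
  refine hf.prod.congr fun i => ?_
  simp_rw [← (b.hasSum_sq_norm_inner (b.matrixRow hf i)).tsum_eq, inner_matrixRow,
    RCLike.norm_conj]

theorem summable_sq_norm_inner_matrixRow (v : E) :
    Summable fun i => ‖⟪b.matrixRow hf i, v⟫_𝕜‖ ^ 2 :=
  ((b.summable_sq_norm_matrixRow hf).mul_right (‖v‖ ^ 2)).of_nonneg_of_le (fun _ => sq_nonneg _)
    fun i => by rw [← mul_pow]; gcongr; exact norm_inner_le_norm _ _

def matrixLinearMap : E →ₗ[𝕜] E where
  toFun v := b.repr.symm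
    ⟨fun i => ⟪b.matrixRow hf i, v⟫_𝕜, memℓp_two_iff.mpr (b.summable_sq_norm_inner_matrixRow hf v)⟩
  map_add' v w := by rw [← map_add]; congr 1; ext i; exact inner_add_right _ _ _
  map_smul' c v := by rw [← map_smul]; congr 1; ext i; exact inner_smul_right _ _ _

theorem inner_matrixLinearMap (i : ι) (v : E) :
    ⟪b i, b.matrixLinearMap hf v⟫_𝕜 = ⟪b.matrixRow hf i, v⟫_𝕜 := by
  rw [← b.repr_apply_apply, matrixLinearMap, LinearMap.coe_mk, AddHom.coe_mk,
    LinearIsometryEquiv.apply_symm_apply]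

theorem norm_matrixLinearMap_le (v : E) :
    ‖b.matrixLinearMap hf v‖ ≤ √(∑' i, ‖b.matrixRow hf i‖ ^ 2) * ‖v‖ := by
  rw [← Real.sqrt_sq (norm_nonneg v), ← Real.sqrt_mul (tsum_nonneg fun _ => sq_nonneg _),
    Real.le_sqrt (norm_nonneg _) (by positivity), ← tsum_mul_right,
    ← (b.hasSum_sq_norm_inner _).tsum_eq]
  simp_rw [inner_matrixLinearMap]
  refine (b.summable_sq_norm_inner_matrixRow hf v).tsum_le_tsum (fun i => ?_)
    ((b.summable_sq_norm_matrixRow hf).mul_right _)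
  rw [← mul_pow]; gcongr; exact norm_inner_le_norm _ _

def matrixCLM : E →L[𝕜] E :=
  (b.matrixLinearMap hf).mkContinuous _ (b.norm_matrixLinearMap_le hf)

theorem inner_matrixCLM_apply (i j : ι) : ⟪b i, b.matrixCLM hf (b j)⟫_𝕜 = f i j := by
  rw [matrixCLM, LinearMap.mkContinuous_apply, inner_matrixLinearMap, ← inner_conj_symm,
    inner_matrixRow, RCLike.conj_conj]

end matrixCLM

end HilbertBasis

section triangularPart

variable {ι : Type*} [LinearOrder ι] (f : ι → ι → ℂ)

def triangularPart (i j : ι) : ℂ :=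
  if i < j then 0 else if i = j then ((f i i).re : ℂ) else f i j + conj (f j i)

theorem triangularPart_of_lt {i j : ι} (h : i < j) : triangularPart f i j = 0 := if_pos h

theorem im_triangularPart_self (i : ι) : (triangularPart f i i).im = 0 := by
  simp [triangularPart]

theorem triangularPart_add_conj (i j : ι) :
    triangularPart f i j + conj (triangularPart f j i) = f i j + conj (f j i) := by
  rcases lt_trichotomy i j with h | rfl | h
  · simp [triangularPart, h, h.not_gt, h.ne', add_comm]
  · simp [triangularPart, Complex.ext_iff]
  · simp [triangularPart, h, h.not_gt, h.ne']

theorem norm_triangularPart_le (i j : ι) :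
    ‖triangularPart f i j‖ ≤ ‖f i j‖ + ‖f j i‖ := by
  rcases lt_trichotomy i j with h | rfl | h
  · simp only [triangularPart, h, if_true, norm_zero]; positivity
  · simp only [triangularPart, lt_irrefl, if_false, if_true, Complex.norm_real, Real.norm_eq_abs]
    linarith [Complex.abs_re_le_norm (f i i), norm_nonneg (f i i)]
  · simpa [triangularPart, h.not_gt, h.ne'] using norm_add_le (f i j) (conj (f j i))

theorem norm_sub_triangularPart_le (i j : ι) :
    ‖f i j - triangularPart f i j‖ ≤ ‖f i j‖ + ‖f j i‖ := by
  rcases lt_trichotomy i j with h | rfl | h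
  · simp [triangularPart, h]
  · refine (Complex.norm_le_abs_re_add_abs_im _).trans ?_
    simp only [triangularPart, lt_irrefl, if_false, if_true, Complex.sub_re, Complex.ofReal_re,
      sub_self, abs_zero, zero_add, Complex.sub_im, Complex.ofReal_im, sub_zero]
    linarith [Complex.abs_im_le_norm (f i i), norm_nonneg (f i i)]
  · simp [triangularPart, h.not_gt, h.ne']

end triangularPart

namespace PL

variable {H : Type*} [NormedAddCommGroup H] [InnerProductSpace ℂ H] (e : HilbertBasis ℤ ℂ H)

theorem isHS_iff {A : H →L[ℂ] H} :
    IsHS e A ↔ Summable fun p : ℤ × ℤ => ‖⟪e p.1, A (e p.2)⟫_ℂ‖ ^ 2 :=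
  e.summable_sq_norm_apply_iff A

theorem hsNorm_eq (A : H →L[ℂ] H) :
    hsNorm e A = √(∑' p : ℤ × ℤ, ‖⟪e p.1, A (e p.2)⟫_ℂ‖ ^ 2) := by
  rw [hsNorm, e.tsum_sq_norm_apply]

theorem isHS_iff_memℓp {A : H →L[ℂ] H} : IsHS e A ↔ Memℓp (fun n => A (e n)) 2 :=
  memℓp_two_iff.symm

theorem isHS_and_hsNorm_le_of_norm_inner_le {A x : H →L[ℂ] H} (hx : IsHS e x)
    (h : ∀ m n, ‖⟪e m, A (e n)⟫_ℂ‖ ≤ ‖⟪e m, x (e n)⟫_ℂ‖ + ‖⟪e n, x (e m)⟫_ℂ‖) :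
    IsHS e A ∧ hsNorm e A ≤ 2 * hsNorm e x := by
  obtain ⟨hA, hle⟩ := summable_sq_and_tsum_sq_le_of_le_add_swap ((isHS_iff e).mp hx)
    (g := fun p => ‖⟪e p.1, A (e p.2)⟫_ℂ‖) (fun _ => norm_nonneg _) fun p => h p.1 p.2
  refine ⟨(isHS_iff e).mpr hA, ?_⟩
  calc hsNorm e A ≤ √(4 * ∑' p : ℤ × ℤ, ‖⟪e p.1, x (e p.2)⟫_ℂ‖ ^ 2) := by
        rw [hsNorm_eq]; exact Real.sqrt_le_sqrt hle
    _ = 2 * hsNorm e x := by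
        rw [Real.sqrt_mul zero_le_four, hsNorm_eq, show (4 : ℝ) = 2 ^ 2 by norm_num,
          Real.sqrt_sq zero_le_two]

def hilbertSchmidt : Submodule ℂ (H →L[ℂ] H) where
  carrier := {A | IsHS e A}
  zero_mem' := by simp [IsHS]
  add_mem' hA hB := (isHS_iff_memℓp e).mpr
    (((isHS_iff_memℓp e).mp hA).add ((isHS_iff_memℓp e).mp hB))
  smul_mem' c _ hA := (isHS_iff_memℓp e).mpr (((isHS_iff_memℓp e).mp hA).const_smul c)

def upperTriRealDiag : Submodule ℝ (H →L[ℂ] H) where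
  carrier := {A | UpperTri e A ∧ RealDiag e A}
  zero_mem' := by simp [UpperTri, RealDiag]
  add_mem' {A B} hA hB := by
    refine ⟨fun m n h => ?_, fun n => ?_⟩
    · rw [add_apply, inner_add_right, hA.1 m n h, hB.1 m n h, add_zero]
    · rw [add_apply, inner_add_right, Complex.add_im, hA.2 n, hB.2 n, add_zero]
  smul_mem' r A hA := by
    refine ⟨fun m n h => ?_, fun n => ?_⟩
    · rw [smul_apply, inner_smul_right_eq_smul, hA.1 m n h, smul_zero]
    · rw [smul_apply, inner_smul_right_eq_smul, Complex.smul_im, hA.2 n, smul_zero]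

def b₂Plus : Submodule ℝ (H →L[ℂ] H) :=
  (hilbertSchmidt e).restrictScalars ℝ ⊓ upperTriRealDiag e

section bPart

variable {e} {x : H →L[ℂ] H}

theorem summable_sq_norm_triangularPart (hx : IsHS e x) :
    Summable fun p : ℤ × ℤ => ‖triangularPart (fun m n => ⟪e m, x (e n)⟫_ℂ) p.1 p.2‖ ^ 2 :=
  (summable_sq_and_tsum_sq_le_of_le_add_swap ((isHS_iff e).mp hx) (fun _ => norm_nonneg _)
    fun p => norm_triangularPart_le _ p.1 p.2).1

open Classical in
variable (e) in
def bPart (x : H →L[ℂ] H) : H →L[ℂ] H :=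
  if hx : IsHS e x then e.matrixCLM (summable_sq_norm_triangularPart hx) else 0

theorem inner_bPart (hx : IsHS e x) (m n : ℤ) :
    ⟪e m, bPart e x (e n)⟫_ℂ = triangularPart (fun m n => ⟪e m, x (e n)⟫_ℂ) m n := by
  rw [bPart, dif_pos hx, HilbertBasis.inner_matrixCLM_apply]

theorem norm_inner_bPart_le (hx : IsHS e x) (m n : ℤ) :
    ‖⟪e m, bPart e x (e n)⟫_ℂ‖ ≤ ‖⟪e m, x (e n)⟫_ℂ‖ + ‖⟪e n, x (e m)⟫_ℂ‖ := by
  rw [inner_bPart hx]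
  exact norm_triangularPart_le _ m n

theorem norm_inner_sub_bPart_le (hx : IsHS e x) (m n : ℤ) :
    ‖⟪e m, (x - bPart e x) (e n)⟫_ℂ‖ ≤ ‖⟪e m, x (e n)⟫_ℂ‖ + ‖⟪e n, x (e m)⟫_ℂ‖ := by
  rw [sub_apply, inner_sub_right, inner_bPart hx]
  exact norm_sub_triangularPart_le (fun m n => ⟪e m, x (e n)⟫_ℂ) m n

theorem bPart_mem (hx : IsHS e x) : bPart e x ∈ b₂Plus e :=
  ⟨(isHS_and_hsNorm_le_of_norm_inner_le e hx (norm_inner_bPart_le hx)).1,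
    fun m n h => by rw [inner_bPart hx, triangularPart_of_lt _ h],
    fun n => by rw [inner_bPart hx]; exact im_triangularPart_self _ n⟩

theorem hsNorm_bPart_le (hx : IsHS e x) : hsNorm e (bPart e x) ≤ 2 * hsNorm e x :=
  (isHS_and_hsNorm_le_of_norm_inner_le e hx (norm_inner_bPart_le hx)).2

theorem hsNorm_sub_bPart_le (hx : IsHS e x) : hsNorm e (x - bPart e x) ≤ 2 * hsNorm e x :=
  (isHS_and_hsNorm_le_of_norm_inner_le e hx (norm_inner_sub_bPart_le hx)).2

end bPart

variable [CompleteSpace H]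

def u₂ : Submodule ℝ (H →L[ℂ] H) :=
  (hilbertSchmidt e).restrictScalars ℝ ⊓ skewAdjoint.submodule ℝ (H →L[ℂ] H)

theorem eq_zero_of_skewHerm_of_upperTri_s8 {A : H →L[ℂ] H} (hs : SkewHerm A) (ht : UpperTri e A)
    (hd : RealDiag e A) : A = 0 := by
  have hA : ∀ m n, ⟪e m, A (e n)⟫_ℂ = -conj ⟪e n, A (e m)⟫_ℂ := fun m n => by
    rw [← inner_star_apply, hs, neg_apply, inner_neg_right, neg_neg]
  refine e.ext_inner fun m n => ?_
  rw [zero_apply, inner_zero_right]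
  rcases lt_trichotomy m n with h | rfl | h
  · exact ht m n h
  · have hre := congrArg Complex.re (hA m m)
    rw [Complex.neg_re, Complex.conj_re] at hre
    exact Complex.ext (by rw [Complex.zero_re]; linarith) (hd m)
  · rw [hA, ht n m h, map_zero, neg_zero]

theorem disjoint_u₂_b₂Plus : Disjoint (u₂ e) (b₂Plus e) :=
  Submodule.disjoint_def.mpr fun _ hu hb => eq_zero_of_skewHerm_of_upperTri_s8 e hu.2 hb.2.1 hb.2.2

section

variable {e} {x : H →L[ℂ] H}

theorem sub_bPart_mem (hx : IsHS e x) : x - bPart e x ∈ u₂ e := by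
  refine ⟨(isHS_and_hsNorm_le_of_norm_inner_le e hx (norm_inner_sub_bPart_le hx)).1, ?_⟩
  show star (x - bPart e x) = -(x - bPart e x)
  refine e.ext_inner fun m n => ?_
  have := triangularPart_add_conj (fun m n => ⟪e m, x (e n)⟫_ℂ) m n
  simp only [inner_star_apply, sub_apply, neg_apply, inner_sub_right, inner_neg_right,
    inner_bPart hx, map_sub]
  linear_combination -this

theorem bPart_add_eq {u b : H →L[ℂ] H} (hu : u ∈ u₂ e) (hb : b ∈ b₂Plus e) :
    bPart e (u + b) = b := by
  have hx : IsHS e (u + b) := (hilbertSchmidt e).add_mem hu.1 hb.1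
  exact (Submodule.eq_and_eq_of_disjoint_of_add_eq_add (disjoint_u₂_b₂Plus e)
    (sub_bPart_mem hx) hu (bPart_mem hx) hb (sub_add_cancel _ _)).2

theorem bPart_add {y : H →L[ℂ] H} (hx : IsHS e x) (hy : IsHS e y) :
    bPart e (x + y) = bPart e x + bPart e y := by
  have := bPart_add_eq (add_mem (sub_bPart_mem hx) (sub_bPart_mem hy))
    (add_mem (bPart_mem hx) (bPart_mem hy))
  rwa [add_add_add_comm, sub_add_cancel, sub_add_cancel] at this

theorem bPart_smul (r : ℝ) (hx : IsHS e x) : bPart e (r • x) = r • bPart e x := by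
  have := bPart_add_eq (Submodule.smul_mem _ r (sub_bPart_mem hx))
    (Submodule.smul_mem _ r (bPart_mem hx))
  rwa [← smul_add, sub_add_cancel] at this

end

/-- `L₂(H) = u₂(H) ⊕ b₂⁺(H)`: every Hilbert–Schmidt operator `x` is
uniquely `x = u + b` with `u` skew-hermitian Hilbert–Schmidt and `b ∈ b₂⁺(H)`, and the
corresponding projections `p_{u₂}`, `p_{b₂⁺}` are (real-)linear and bounded for the
Hilbert–Schmidt norm. -/
theorem statement_8 {H : Type*} [NormedAddCommGroup H] [InnerProductSpace ℂ H]
    [CompleteSpace H] (e : HilbertBasis ℤ ℂ H) :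
    (∀ x : H →L[ℂ] H, IsHS e x →
      ∃! ub : (H →L[ℂ] H) × (H →L[ℂ] H),
        InU2 e ub.1 ∧ InB2 e ub.2 ∧ x = ub.1 + ub.2) ∧
    ∃ pu pb : (H →L[ℂ] H) → (H →L[ℂ] H),
      (∀ x : H →L[ℂ] H, IsHS e x → InU2 e (pu x) ∧ InB2 e (pb x) ∧ x = pu x + pb x) ∧
      (∀ x y : H →L[ℂ] H, IsHS e x → IsHS e y →
        pu (x + y) = pu x + pu y ∧ pb (x + y) = pb x + pb y) ∧
      (∀ (r : ℝ) (x : H →L[ℂ] H), IsHS e x →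
        pu (r • x) = r • pu x ∧ pb (r • x) = r • pb x) ∧
      ∃ c : ℝ, ∀ x : H →L[ℂ] H, IsHS e x →
        hsNorm e (pu x) ≤ c * hsNorm e x ∧ hsNorm e (pb x) ≤ c * hsNorm e x := by
  have decompose : ∀ x, IsHS e x → InU2 e (x - bPart e x) ∧ InB2 e (bPart e x) ∧
      x = x - bPart e x + bPart e x :=
    fun x hx => ⟨sub_bPart_mem hx, bPart_mem hx, (sub_add_cancel x _).symm⟩
  refine ⟨fun x hx => ⟨(x - bPart e x, bPart e x), decompose x hx, ?_⟩,
    fun x => x - bPart e x, bPart e, decompose, fun x y hx hy => ?_, fun r x hx => ?_,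
    2, fun x hx => ⟨hsNorm_sub_bPart_le hx, hsNorm_bPart_le hx⟩⟩
  · rintro ⟨u, b⟩ ⟨hu, hb, rfl⟩
    rw [bPart_add_eq hu hb, add_sub_cancel_right]
  · dsimp only
    rw [bPart_add hx hy]
    exact ⟨add_sub_add_comm _ _ _ _, rfl⟩
  · dsimp only
    rw [bPart_smul r hx]
    exact ⟨(smul_sub r x _).symm, rfl⟩

end PL
end
end

section
/- Let g be a unitary operator on H and x₁, x₂, x₃ trace-class operators on H, and set A = g⁻¹ p_{b₂⁺}(x₁) g, B = g⁻¹ p_{b₂⁺}(x₂) g, C = g⁻¹ p_{b₂⁺}(x₃) g (Hilbert–Schmidt operators). Then the six-term cyclic sum vanishes: Im Tr(p_{u₂}(C)[p_{b₂⁺}(A), p_{b₂⁺}(B)]) + Im Tr(p_{u₂}(C)[p_{b₂⁺}(A), p_{u₂}(B)]) + Im Tr(p_{u₂}(A)[p_{b₂⁺}(B), p_{b₂⁺}(C)]) + Im Tr(p_{u₂}(A)[p_{b₂⁺}(B), p_{u₂}(C)]) + Im Tr(p_{u₂}(B)[p_{b₂⁺}(C), p_{b₂⁺}(A)]) + Im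 Tr(p_{u₂}(B)[p_{b₂⁺}(C), p_{u₂}(A)]) = 0, where [·,·] is the commutator. -/
/-!
Put `ω(X, Y, Z) = Im Tr(X [Y, Z])` on Hilbert–Schmidt operators. The trace is cyclic on products
of two Hilbert–Schmidt operators, so `ω` is invariant under cyclic permutations of its arguments
and under conjugation by a unitary; it is also additive in each argument. Splitting `A`, `B`, `C`
into their `u₂`- and `b₂⁺`-parts, the six terms of the sum are, up to cyclic rotation, the six
mixed terms in the expansion of `ω(A, B, C)`. The remaining terms vanish: `ω(A, B, C) = ω(p_{b₂⁺} x₁, p_{b₂⁺} x₂,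
p_{b₂⁺} x₃)`, and on `b₂⁺` the form is zero because products of upper triangular operators with
real diagonal again have real diagonal, hence real trace; on `u₂` it is zero because
`conj Tr(XYZ) = -Tr(ZYX)` for skew-hermitian `X, Y, Z`.
-/

noncomputable section
open ContinuousLinearMap

namespace PL

variable {H : Type*} [NormedAddCommGroup H] [InnerProductSpace ℂ H] [CompleteSpace H]

/-- Given projection maps `pu`, `pb` realizing `L₂(H) = u₂(H) ⊕ b₂⁺(H)`, and a
unitary `g` (so `g⁻¹ = g*`), the bilinear map
`Π_r(g)(x₁, x₂) = Im Tr((g⁻¹ p_{b₂⁺}(x₁) g) · p_{u₂}(g⁻¹ p_{b₂⁺}(x₂) g))`. -/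
def Pir (e : HilbertBasis ℤ ℂ H) (pu pb : (H →L[ℂ] H) → (H →L[ℂ] H))
    (g x₁ x₂ : H →L[ℂ] H) : ℝ :=
  (traceOp e ((star g * pb x₁ * g) * pu (star g * pb x₂ * g))).im

end PL

-- Reopened so that the lemmas below do not inherit the section variable `[CompleteSpace H]`.
namespace PL

open scoped InnerProductSpace

variable {H : Type*} [NormedAddCommGroup H] [InnerProductSpace ℂ H] {e : HilbertBasis ℤ ℂ H}

lemma hasSum_norm_inner_sq (e : HilbertBasis ℤ ℂ H) (v : H) :
    HasSum (fun m : ℤ => ‖⟪e m, v⟫_ℂ‖ ^ 2) (‖v‖ ^ 2) := by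
  have h := Complex.hasSum_re (e.hasSum_inner_mul_inner v v)
  simp only [← inner_conj_symm v (e _), RCLike.conj_mul] at h
  simpa [← Complex.ofReal_pow, inner_self_eq_norm_sq_to_K] using h

lemma hasSum_inner_mul_apply (e : HilbertBasis ℤ ℂ H) (X Y : H →L[ℂ] H) (m n : ℤ) :
    HasSum (fun k : ℤ => ⟪e m, X (e k)⟫_ℂ * ⟪e k, Y (e n)⟫_ℂ) ⟪e m, (X * Y) (e n)⟫_ℂ := by
  have h := (e.hasSum_repr (Y (e n))).mapL ((innerSL ℂ (e m)).comp X)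
  simpa [e.repr_apply_apply, mul_comm] using h

lemma isHS_iff_summable_entries {X : H →L[ℂ] H} :
    IsHS e X ↔ Summable (fun p : ℤ × ℤ => ‖⟪e p.2, X (e p.1)⟫_ℂ‖ ^ 2) := by
  rw [summable_prod_of_nonneg (fun _ => sq_nonneg _)]
  simp only [fun n => (hasSum_norm_inner_sq e (X (e n))).tsum_eq, IsHS]
  exact ⟨fun h => ⟨fun n => (hasSum_norm_inner_sq e _).summable, h⟩, And.right⟩

lemma IsHS.add {X Y : H →L[ℂ] H} (hX : IsHS e X) (hY : IsHS e Y) : IsHS e (X + Y) := by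
  refine .of_nonneg_of_le (fun n => sq_nonneg _) (fun n => ?_)
    ((Summable.add hX hY).mul_left 2)
  calc ‖(X + Y) (e n)‖ ^ 2 ≤ (‖X (e n)‖ + ‖Y (e n)‖) ^ 2 := by
        gcongr; exact norm_add_le _ _
    _ ≤ 2 * (‖X (e n)‖ ^ 2 + ‖Y (e n)‖ ^ 2) := add_sq_le

lemma IsHS.mul_left {X : H →L[ℂ] H} (hX : IsHS e X) (T : H →L[ℂ] H) : IsHS e (T * X) := by
  refine .of_nonneg_of_le (fun n => sq_nonneg _) (fun n => ?_)
    (Summable.mul_left (‖T‖ ^ 2) hX)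
  rw [← mul_pow]
  gcongr
  exact T.le_opNorm _

lemma summable_entry_mul_entry {X Y : H →L[ℂ] H} (hX : IsHS e X) (hY : IsHS e Y) :
    Summable (fun p : ℤ × ℤ => ⟪e p.1, X (e p.2)⟫_ℂ * ⟪e p.2, Y (e p.1)⟫_ℂ) := by
  have hXt : Summable (fun p : ℤ × ℤ => ‖⟪e p.1, X (e p.2)⟫_ℂ‖ ^ 2) :=
    (isHS_iff_summable_entries.mp hX).prod_symm
  refine .of_norm (.of_nonneg_of_le (fun _ => norm_nonneg _) (fun p => ?_)
    ((hXt.add (isHS_iff_summable_entries.mp hY)).div_const 2))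
  rw [norm_mul]
  linarith [two_mul_le_add_sq ‖⟪e p.1, X (e p.2)⟫_ℂ‖ ‖⟪e p.2, Y (e p.1)⟫_ℂ‖]

lemma summable_inner_mul_apply_self {X Y : H →L[ℂ] H} (hX : IsHS e X) (hY : IsHS e Y) :
    Summable (fun n : ℤ => ⟪e n, (X * Y) (e n)⟫_ℂ) := by
  refine (summable_entry_mul_entry hX hY).prod.congr fun n => ?_
  exact (hasSum_inner_mul_apply e X Y n n).tsum_eq

lemma traceOp_mul_comm {X Y : H →L[ℂ] H} (hX : IsHS e X) (hY : IsHS e Y) :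
    traceOp e (X * Y) = traceOp e (Y * X) := by
  calc traceOp e (X * Y)
      = ∑' n : ℤ, ∑' k : ℤ, ⟪e n, X (e k)⟫_ℂ * ⟪e k, Y (e n)⟫_ℂ :=
        tsum_congr fun n => (hasSum_inner_mul_apply e X Y n n).tsum_eq.symm
    _ = ∑' k : ℤ, ∑' n : ℤ, ⟪e k, Y (e n)⟫_ℂ * ⟪e n, X (e k)⟫_ℂ := by
        have h : Summable (Function.uncurry fun n k : ℤ => ⟪e n, X (e k)⟫_ℂ * ⟪e k, Y (e n)⟫_ℂ) :=
          summable_entry_mul_entry hX hY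
        rw [← h.tsum_comm]
        simp only [mul_comm]
    _ = traceOp e (Y * X) :=
        tsum_congr fun k => (hasSum_inner_mul_apply e Y X k k).tsum_eq

lemma traceOp_add {X Y : H →L[ℂ] H} (hX : Summable (fun n : ℤ => ⟪e n, X (e n)⟫_ℂ))
    (hY : Summable (fun n : ℤ => ⟪e n, Y (e n)⟫_ℂ)) :
    traceOp e (X + Y) = traceOp e X + traceOp e Y := by
  simp only [traceOp, add_apply, inner_add_right, hX.tsum_add hY]

lemma traceOp_sub {X Y : H →L[ℂ] H} (hX : Summable (fun n : ℤ => ⟪e n, X (e n)⟫_ℂ))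
    (hY : Summable (fun n : ℤ => ⟪e n, Y (e n)⟫_ℂ)) :
    traceOp e (X - Y) = traceOp e X - traceOp e Y := by
  simp only [traceOp, sub_apply, inner_sub_right, hX.tsum_sub hY]

lemma traceOp_neg (X : H →L[ℂ] H) : traceOp e (-X) = -traceOp e X := by
  simp only [traceOp, neg_apply, inner_neg_right, tsum_neg]

lemma im_traceOp_eq_zero_of_realDiag {X : H →L[ℂ] H} (hX : RealDiag e X) :
    (traceOp e X).im = 0 := by
  rw [traceOp, ← Complex.conj_eq_iff_im, ← Complex.star_def, tsum_star]
  exact tsum_congr fun n => Complex.conj_eq_iff_im.mpr (hX n)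

lemma UpperTri.mul {X Y : H →L[ℂ] H} (hX : UpperTri e X) (hY : UpperTri e Y) :
    UpperTri e (X * Y) := by
  intro m n hmn
  refine (hasSum_inner_mul_apply e X Y m n).unique (hasSum_zero.congr_fun fun k => ?_)
  rcases lt_or_ge m k with hmk | hkm
  · rw [hX m k hmk, zero_mul]
  · rw [hY k n (hkm.trans_lt hmn), mul_zero]

lemma inner_mul_apply_self_of_upperTri {X Y : H →L[ℂ] H} (hX : UpperTri e X)
    (hY : UpperTri e Y) (n : ℤ) :
    ⟪e n, (X * Y) (e n)⟫_ℂ = ⟪e n, X (e n)⟫_ℂ * ⟪e n, Y (e n)⟫_ℂ := by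
  refine (hasSum_inner_mul_apply e X Y n n).unique (hasSum_single n fun k hkn => ?_)
  rcases hkn.lt_or_gt with hkn | hnk
  · rw [hY k n hkn, mul_zero]
  · rw [hX n k hnk, zero_mul]

lemma RealDiag.mul {X Y : H →L[ℂ] H} (hX : RealDiag e X) (hY : RealDiag e Y)
    (hXt : UpperTri e X) (hYt : UpperTri e Y) : RealDiag e (X * Y) := fun n => by
  rw [inner_mul_apply_self_of_upperTri hXt hYt, Complex.mul_im, hX n, hY n]
  ring

def imTraceMulComm (e : HilbertBasis ℤ ℂ H) (X Y Z : H →L[ℂ] H) : ℝ :=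
  (traceOp e (X * (Y * Z - Z * Y))).im

section ImTraceMulComm

variable {X X' Y Y' Z Z' : H →L[ℂ] H}

lemma imTraceMulComm_eq_sub (hX : IsHS e X) (hY : IsHS e Y) (hZ : IsHS e Z) :
    imTraceMulComm e X Y Z = (traceOp e (X * (Y * Z))).im - (traceOp e (X * (Z * Y))).im := by
  rw [imTraceMulComm, mul_sub, traceOp_sub (summable_inner_mul_apply_self hX (hZ.mul_left Y))
    (summable_inner_mul_apply_self hX (hY.mul_left Z)), Complex.sub_im]

lemma imTraceMulComm_rotate (hX : IsHS e X) (hY : IsHS e Y) (hZ : IsHS e Z) :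
    imTraceMulComm e X Y Z = imTraceMulComm e Y Z X := by
  have hXYZ : traceOp e (X * (Y * Z)) = traceOp e (Y * (Z * X)) := by
    rw [traceOp_mul_comm hX (hZ.mul_left Y), mul_assoc]
  have hXZY : traceOp e (X * (Z * Y)) = traceOp e (Y * (X * Z)) := by
    rw [← mul_assoc, traceOp_mul_comm (hZ.mul_left X) hY]
  rw [imTraceMulComm_eq_sub hX hY hZ, imTraceMulComm_eq_sub hY hZ hX, hXYZ, hXZY]

lemma imTraceMulComm_add_left (hX : IsHS e X) (hX' : IsHS e X') (hY : IsHS e Y)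
    (hZ : IsHS e Z) :
    imTraceMulComm e (X + X') Y Z = imTraceMulComm e X Y Z + imTraceMulComm e X' Y Z := by
  simp only [imTraceMulComm_eq_sub (hX.add hX') hY hZ, imTraceMulComm_eq_sub hX hY hZ,
    imTraceMulComm_eq_sub hX' hY hZ, add_mul,
    traceOp_add (summable_inner_mul_apply_self hX (hZ.mul_left Y))
      (summable_inner_mul_apply_self hX' (hZ.mul_left Y)),
    traceOp_add (summable_inner_mul_apply_self hX (hY.mul_left Z))
      (summable_inner_mul_apply_self hX' (hY.mul_left Z)), Complex.add_im]
  ring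

lemma imTraceMulComm_add_mid (hX : IsHS e X) (hY : IsHS e Y) (hY' : IsHS e Y')
    (hZ : IsHS e Z) :
    imTraceMulComm e X (Y + Y') Z = imTraceMulComm e X Y Z + imTraceMulComm e X Y' Z := by
  rw [imTraceMulComm_rotate hX (hY.add hY') hZ, imTraceMulComm_add_left hY hY' hZ hX,
    ← imTraceMulComm_rotate hX hY hZ, ← imTraceMulComm_rotate hX hY' hZ]

lemma imTraceMulComm_add_right (hX : IsHS e X) (hY : IsHS e Y) (hZ : IsHS e Z)
    (hZ' : IsHS e Z') :
    imTraceMulComm e X Y (Z + Z') = imTraceMulComm e X Y Z + imTraceMulComm e X Y Z' := by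
  rw [← imTraceMulComm_rotate (hZ.add hZ') hX hY, imTraceMulComm_add_left hZ hZ' hX hY,
    imTraceMulComm_rotate hZ hX hY, imTraceMulComm_rotate hZ' hX hY]

lemma imTraceMulComm_add_add_add (hX : IsHS e X) (hX' : IsHS e X') (hY : IsHS e Y)
    (hY' : IsHS e Y') (hZ : IsHS e Z) (hZ' : IsHS e Z') :
    imTraceMulComm e Z X' Y' + imTraceMulComm e Z X' Y + imTraceMulComm e X Y' Z' +
      imTraceMulComm e X Y' Z + imTraceMulComm e Y Z' X' + imTraceMulComm e Y Z' X =
    imTraceMulComm e (X + X') (Y + Y') (Z + Z') - imTraceMulComm e X Y Z -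
      imTraceMulComm e X' Y' Z' := by
  rw [imTraceMulComm_add_left hX hX' (hY.add hY') (hZ.add hZ'),
    imTraceMulComm_add_mid hX hY hY' (hZ.add hZ'), imTraceMulComm_add_mid hX' hY hY' (hZ.add hZ'),
    imTraceMulComm_add_right hX hY hZ hZ', imTraceMulComm_add_right hX hY' hZ hZ',
    imTraceMulComm_add_right hX' hY hZ hZ', imTraceMulComm_add_right hX' hY' hZ hZ',
    imTraceMulComm_rotate hZ hX' hY', imTraceMulComm_rotate hZ hX' hY,
    imTraceMulComm_rotate hY hZ' hX', imTraceMulComm_rotate hZ' hX' hY,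
    imTraceMulComm_rotate hY hZ' hX, imTraceMulComm_rotate hZ' hX hY]
  ring

lemma imTraceMulComm_eq_zero_of_inB2 (hX : InB2 e X) (hY : InB2 e Y) (hZ : InB2 e Z) :
    imTraceMulComm e X Y Z = 0 := by
  obtain ⟨hXs, hXt, hXd⟩ := hX
  obtain ⟨hYs, hYt, hYd⟩ := hY
  obtain ⟨hZs, hZt, hZd⟩ := hZ
  rw [imTraceMulComm_eq_sub hXs hYs hZs,
    im_traceOp_eq_zero_of_realDiag (hXd.mul (hYd.mul hZd hYt hZt) hXt (hYt.mul hZt)),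
    im_traceOp_eq_zero_of_realDiag (hXd.mul (hZd.mul hYd hZt hYt) hXt (hZt.mul hYt)), sub_zero]

end ImTraceMulComm

section Complete

variable [CompleteSpace H]

lemma traceOp_star (X : H →L[ℂ] H) : traceOp e (star X) = star (traceOp e X) := by
  rw [traceOp, traceOp, tsum_star]
  refine tsum_congr fun n => ?_
  rw [star_eq_adjoint, adjoint_inner_right, ← inner_conj_symm]
  rfl

lemma IsHS.star {X : H →L[ℂ] H} (hX : IsHS e X) : IsHS e (star X) := by
  rw [isHS_iff_summable_entries] at hX ⊢
  refine hX.prod_symm.congr fun p => ?_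
  rw [star_eq_adjoint, adjoint_inner_right, norm_inner_symm]
  rfl

lemma IsHS.mul_right {X : H →L[ℂ] H} (hX : IsHS e X) (T : H →L[ℂ] H) : IsHS e (X * T) := by
  simpa only [star_mul, star_star] using (hX.star.mul_left (Star.star T)).star

lemma norm_apply_sq_le_mul_re_inner_absCLM (X : H →L[ℂ] H) (v : H) :
    ‖X v‖ ^ 2 ≤ ‖CFC.sqrt (absCLM X)‖ ^ 2 * (⟪v, absCLM X v⟫_ℂ).re := by
  set S := absCLM X
  set R := CFC.sqrt S
  have hS : 0 ≤ S := CFC.sqrt_nonneg _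
  have hSS : star S * S = star X * X := by
    rw [hS.isSelfAdjoint.star_eq]
    exact CFC.abs_mul_abs X
  calc ‖X v‖ ^ 2 = (⟪v, (star X * X) v⟫_ℂ).re := apply_norm_sq_eq_inner_adjoint_right X v
    _ = ‖S v‖ ^ 2 := by rw [← hSS]; exact (apply_norm_sq_eq_inner_adjoint_right S v).symm
    _ = ‖R (R v)‖ ^ 2 := by rw [← mul_apply_eq_comp, CFC.sqrt_mul_sqrt_self S]
    _ ≤ (‖R‖ * ‖R v‖) ^ 2 := by gcongr; exact R.le_opNorm _
    _ = ‖R‖ ^ 2 * (⟪v, (star R * R) v⟫_ℂ).re := by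
        rw [mul_pow, apply_norm_sq_eq_inner_adjoint_right R v]; rfl
    _ = ‖R‖ ^ 2 * (⟪v, S v⟫_ℂ).re := by
        rw [(CFC.sqrt_nonneg S).isSelfAdjoint.star_eq, CFC.sqrt_mul_sqrt_self S]

lemma IsTC.isHS {X : H →L[ℂ] H} (hX : IsTC e X) : IsHS e X :=
  .of_nonneg_of_le (fun _ => sq_nonneg _)
    (fun n => norm_apply_sq_le_mul_re_inner_absCLM X (e n)) (hX.mul_left _)

lemma traceOp_unitary_conj {g X Y : H →L[ℂ] H} (hg : g ∈ unitary (H →L[ℂ] H))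
    (hX : IsHS e X) (hY : IsHS e Y) :
    traceOp e (star g * (X * Y) * g) = traceOp e (X * Y) := by
  calc traceOp e (star g * (X * Y) * g) = traceOp e ((star g * X) * (Y * g)) := by
        simp only [mul_assoc]
    _ = traceOp e (Y * (g * star g) * X) := by
        rw [traceOp_mul_comm (hX.mul_left _) (hY.mul_right _)]
        simp only [mul_assoc]
    _ = traceOp e (X * Y) := by
        rw [Unitary.mul_star_self_of_mem hg, mul_one, traceOp_mul_comm hY hX]

lemma imTraceMulComm_eq_zero_of_inU2 {X Y Z : H →L[ℂ] H} (hX : InU2 e X) (hY : InU2 e Y)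
    (hZ : InU2 e Z) : imTraceMulComm e X Y Z = 0 := by
  obtain ⟨hXs, hXk : star X = -X⟩ := hX
  obtain ⟨hYs, hYk : star Y = -Y⟩ := hY
  obtain ⟨hZs, hZk : star Z = -Z⟩ := hZ
  have hstar : star (X * (Y * Z)) = -(Z * Y * X) := by
    rw [star_mul, star_mul, hXk, hYk, hZk, neg_mul_neg, mul_neg]
  have h := congrArg Complex.im (traceOp_star (e := e) (X * (Y * Z)))
  rw [hstar, traceOp_neg, traceOp_mul_comm (hYs.mul_left Z) hXs, Complex.star_def,
    Complex.conj_im, Complex.neg_im] at h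
  rw [imTraceMulComm_eq_sub hXs hYs hZs]
  linarith

lemma imTraceMulComm_unitary_conj {g X Y Z : H →L[ℂ] H} (hg : g ∈ unitary (H →L[ℂ] H))
    (hX : IsHS e X) (hY : IsHS e Y) (hZ : IsHS e Z) :
    imTraceMulComm e (star g * X * g) (star g * Y * g) (star g * Z * g) =
      imTraceMulComm e X Y Z := by
  have hconj : ∀ V W : H →L[ℂ] H, star g * V * g * (star g * W * g) = star g * (V * W) * g :=
    fun V W => calc
      star g * V * g * (star g * W * g) = star g * V * (g * star g) * W * g := by
        simp only [mul_assoc]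
      _ = star g * (V * W) * g := by
        rw [Unitary.mul_star_self_of_mem hg, mul_one, mul_assoc (star g)]
  rw [imTraceMulComm_eq_sub ((hX.mul_left _).mul_right g) ((hY.mul_left _).mul_right g)
      ((hZ.mul_left _).mul_right g), hconj, hconj, hconj, hconj,
    traceOp_unitary_conj hg hX (hZ.mul_left Y), traceOp_unitary_conj hg hX (hY.mul_left Z),
    imTraceMulComm_eq_sub hX hY hZ]

end Complete

/-- with `A = g⁻¹ p_{b₂⁺}(x₁) g`, `B = g⁻¹ p_{b₂⁺}(x₂) g`,
`C = g⁻¹ p_{b₂⁺}(x₃) g`, the six-term cyclic sum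
`Im Tr(p_{u₂}(C)[p_{b₂⁺}(A), p_{b₂⁺}(B)]) + Im Tr(p_{u₂}(C)[p_{b₂⁺}(A), p_{u₂}(B)]) + ⋯`
vanishes. -/
theorem statement_17 {H : Type*} [NormedAddCommGroup H] [InnerProductSpace ℂ H]
    [CompleteSpace H] (e : HilbertBasis ℤ ℂ H)
    (pu pb : (H →L[ℂ] H) → (H →L[ℂ] H))
    (hdec : ∀ x : H →L[ℂ] H, IsHS e x →
      InU2 e (pu x) ∧ InB2 e (pb x) ∧ pu x + pb x = x)
    (g : H →L[ℂ] H) (hg : g ∈ unitary (H →L[ℂ] H))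
    (x₁ x₂ x₃ : H →L[ℂ] H) (hx₁ : IsTC e x₁) (hx₂ : IsTC e x₂) (hx₃ : IsTC e x₃)
    (A B C : H →L[ℂ] H)
    (hA : A = star g * pb x₁ * g) (hB : B = star g * pb x₂ * g)
    (hC : C = star g * pb x₃ * g) :
    (traceOp e (pu C * (pb A * pb B - pb B * pb A))).im +
    (traceOp e (pu C * (pb A * pu B - pu B * pb A))).im +
    (traceOp e (pu A * (pb B * pb C - pb C * pb B))).im +
    (traceOp e (pu A * (pb B * pu C - pu C * pb B))).im +
    (traceOp e (pu B * (pb C * pb A - pb A * pb C))).im +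
    (traceOp e (pu B * (pb C * pu A - pu A * pb C))).im = 0 := by
  obtain ⟨-, hα, -⟩ := hdec x₁ hx₁.isHS
  obtain ⟨-, hβ, -⟩ := hdec x₂ hx₂.isHS
  obtain ⟨-, hγ, -⟩ := hdec x₃ hx₃.isHS
  have hABC : imTraceMulComm e A B C = 0 := by
    rw [hA, hB, hC, imTraceMulComm_unitary_conj hg hα.1 hβ.1 hγ.1]
    exact imTraceMulComm_eq_zero_of_inB2 hα hβ hγ
  obtain ⟨huA, hbA, hsumA⟩ := hdec A (hA ▸ (hα.1.mul_left _).mul_right g)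
  obtain ⟨huB, hbB, hsumB⟩ := hdec B (hB ▸ (hβ.1.mul_left _).mul_right g)
  obtain ⟨huC, hbC, hsumC⟩ := hdec C (hC ▸ (hγ.1.mul_left _).mul_right g)
  have h := imTraceMulComm_add_add_add huA.1 hbA.1 huB.1 hbB.1 huC.1 hbC.1
  rw [hsumA, hsumB, hsumC, hABC, imTraceMulComm_eq_zero_of_inU2 huA huB huC,
    imTraceMulComm_eq_zero_of_inB2 hbA hbB hbC, sub_zero, sub_zero] at h
  exact h

end PL
end
end
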